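/- Let 1 < p < q < ∞ and let X = ℝ with Euclidean distance and the measure dμ = w dx where w(x) = dist(x, {1,−1})^{q−1}. Then the variational p-capacity of the closed ball [−1,1] relative to (−2,2) is zero: cap_p([−1,1], (−2,2)) = 0, as witnessed by the test functions u_ρ(x) = max{0, 1 − dist(x,[−1,1])/ρ} whose energy ∫ |u_ρ'|^p w dx ≤ (2/q) ρ^{q−p} → 0 as ρ → 0. -/

import Mathlib

/-!
For `0 < r ≤ 1` the function `u_r = max {0, 1 - dist(·, [-1, 1]) / r}` is admissible, and `r⁻¹` on
the shell `0 < |x| - 1 < r` is a genuine upper gradient of it: along a `1`-Lipschitz curve the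
truncated distance changes at most by the time the curve spends in the shell, by the
intermediate value theorem and because `1`-Lipschitz maps of `ℝ` do not increase length.
On the shell the weight is at most `r ^ (q - 1)` and the shell has length `2 r`, so the energy
is at most `r ^ (q - 1) * r ^ (-p) * 2 r = 2 r ^ (q - p)`, which tends to `0` since `p < q`.
-/

open MeasureTheory Metric Set ENNReal NNReal

/-- The integral of `g` along a curve `γ` parametrized by arc length on `[0, L]`. -/
noncomputable def curveLintegral {X : Type*} (g : X → ℝ≥0∞) (γ : ℝ → X) (L : ℝ) : ℝ≥0∞ :=
  ∫⁻ t in Set.Icc 0 L, g (γ t)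

/-- `g` is a `p`-weak upper gradient of `u`: the upper gradient inequality holds
along every nonconstant `1`-Lipschitz (arc-length parametrized) curve except for a
family of curves on which some fixed nonnegative Borel function `ρ ∈ L^p_loc`
has infinite line integral. -/
def IsPWeakUpperGradient {X : Type*} [MetricSpace X] [MeasurableSpace X]
    (μ : Measure X) (p : ℝ) (u : X → ℝ) (g : X → ℝ≥0∞) : Prop :=
  Measurable g ∧ ∃ ρ : X → ℝ≥0∞, Measurable ρ ∧
    (∀ x : X, ∃ r : ℝ, 0 < r ∧ ∫⁻ y in ball x r, ρ y ^ p ∂μ < ∞) ∧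
    ∀ (γ : ℝ → X) (L : ℝ), 0 < L → LipschitzWith 1 γ →
      curveLintegral ρ γ L ≠ ∞ →
      ENNReal.ofReal |u (γ 0) - u (γ L)| ≤ curveLintegral g γ L

/-- The variational `p`-capacity of `F` relative to `Ω`. -/
noncomputable def pCapacity {X : Type*} [MetricSpace X] [MeasurableSpace X]
    (μ : Measure X) (p : ℝ) (F Ω : Set X) : ℝ≥0∞ :=
  sInf { t | ∃ u : X → ℝ, (∃ K : ℝ≥0, LipschitzWith K u) ∧
    (∀ x ∈ F, 1 ≤ u x) ∧ (∀ x ∉ Ω, u x = 0) ∧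
    ∃ g : X → ℝ≥0∞, IsPWeakUpperGradient μ p u g ∧ t = ∫⁻ x in Ω, g x ^ p ∂μ }
open Filter Topology

lemma LipschitzWith.volume_image_le {f : ℝ → ℝ} (hf : LipschitzWith 1 f) (s : Set ℝ) :
    volume (f '' s) ≤ volume s := by
  simpa [hausdorffMeasure_real] using hf.hausdorffMeasure_image_le zero_le_one s

/-- By the intermediate value theorem, `h` maps the times at which it lies strictly between its
endpoint values onto the whole interval between them. -/
lemma LipschitzWith.ofReal_abs_sub_le_volume {h : ℝ → ℝ} (hh : LipschitzWith 1 h) {L : ℝ}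
    (hL : 0 ≤ L) : ENNReal.ofReal |h L - h 0| ≤ volume (Icc 0 L ∩ h ⁻¹' uIoo (h 0) (h L)) := by
  have hcover : uIoo (h 0) (h L) ⊆ h '' (Icc 0 L ∩ h ⁻¹' uIoo (h 0) (h L)) := by
    intro y hy
    obtain ⟨t, ht, rfl⟩ := intermediate_value_uIcc hh.continuous.continuousOn
      (Ioo_subset_Icc_self hy : y ∈ uIcc (h 0) (h L))
    exact ⟨t, ⟨uIcc_of_le hL ▸ ht, hy⟩, rfl⟩
  calc ENNReal.ofReal |h L - h 0| = volume (uIoo (h 0) (h L)) := by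
        rw [uIoo, Real.volume_Ioo, max_sub_min_eq_abs]
    _ ≤ volume (h '' (Icc 0 L ∩ h ⁻¹' uIoo (h 0) (h L))) := measure_mono hcover
    _ ≤ _ := hh.volume_image_le _

lemma curveLintegral_indicator_const {X : Type*} {s : Set X} {γ : ℝ → X}
    (hs : MeasurableSet (γ ⁻¹' s)) (c : ℝ≥0∞) (L : ℝ) :
    curveLintegral (s.indicator fun _ => c) γ L = c * volume (γ ⁻¹' s ∩ Icc 0 L) := by
  change ∫⁻ t in Icc 0 L, (γ ⁻¹' s).indicator (fun _ => c) t = _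
  rw [lintegral_indicator_const hs, Measure.restrict_apply hs]

def IsUpperGradient {X : Type*} [MetricSpace X] (u : X → ℝ) (g : X → ℝ≥0∞) : Prop :=
  ∀ (γ : ℝ → X) (L : ℝ), 0 < L → LipschitzWith 1 γ →
    ENNReal.ofReal |u (γ 0) - u (γ L)| ≤ curveLintegral g γ L

namespace IsUpperGradient

variable {X : Type*} [MetricSpace X] {u : X → ℝ} {g : X → ℝ≥0∞}

/-- With `ρ = 0` no curve is exceptional. -/
lemma isPWeakUpperGradient [MeasurableSpace X] (hu : IsUpperGradient u g) (hg : Measurable g)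
    (μ : Measure X) {p : ℝ} (hp : 0 < p) : IsPWeakUpperGradient μ p u g :=
  ⟨hg, 0, measurable_const, fun _ => ⟨1, one_pos, by simp [ENNReal.zero_rpow_of_pos hp]⟩,
    fun γ L hL hγ _ => hu γ L hL hγ⟩

lemma const_sub_mul (hu : IsUpperGradient u g) (a c : ℝ) :
    IsUpperGradient (fun x => a - c * u x) (fun x => ENNReal.ofReal |c| * g x) := by
  intro γ L hL hγ
  calc ENNReal.ofReal |a - c * u (γ 0) - (a - c * u (γ L))|
      = ENNReal.ofReal |c| * ENNReal.ofReal |u (γ 0) - u (γ L)| := by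
        rw [show a - c * u (γ 0) - (a - c * u (γ L)) = -(c * (u (γ 0) - u (γ L))) by ring,
          abs_neg, abs_mul, ENNReal.ofReal_mul (abs_nonneg c)]
    _ ≤ ENNReal.ofReal |c| * curveLintegral g γ L := by gcongr; exact hu γ L hL hγ
    _ = curveLintegral (fun x => ENNReal.ofReal |c| * g x) γ L :=
        (lintegral_const_mul' _ _ ENNReal.ofReal_ne_top).symm

end IsUpperGradient

lemma isUpperGradient_min_max {X : Type*} [MetricSpace X] {f : X → ℝ} (hf : LipschitzWith 1 f)
    {a b : ℝ} (hab : a ≤ b) :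
    IsUpperGradient (fun x => min (max (f x) a) b) ((f ⁻¹' Ioo a b).indicator 1) := by
  intro γ L hL hγ
  set h : ℝ → ℝ := fun t => min (max (f (γ t)) a) b
  have hh : LipschitzWith 1 h := by
    simpa using ((hf.comp hγ).max_const a).min_const b
  have hmem : ∀ t, h t ∈ Icc a b := fun t => ⟨le_min (le_max_right _ _) hab, min_le_right _ _⟩
  have hsub : Icc 0 L ∩ h ⁻¹' uIoo (h 0) (h L) ⊆ γ ⁻¹' (f ⁻¹' Ioo a b) ∩ Icc 0 L := by
    rintro t ⟨ht, hlo, hhi⟩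
    have hlo' : a < h t := lt_of_le_of_lt (le_min (hmem 0).1 (hmem L).1) hlo
    have hhi' : h t < b := lt_of_lt_of_le hhi (max_le (hmem 0).2 (hmem L).2)
    refine ⟨⟨?_, ?_⟩, ht⟩
    · exact (lt_max_iff.1 (lt_min_iff.1 hlo').1).resolve_right (lt_irrefl a)
    · exact (max_lt_iff.1 ((min_lt_iff.1 hhi').resolve_right (lt_irrefl b))).1
  have hpre : MeasurableSet (γ ⁻¹' (f ⁻¹' Ioo a b)) :=
    (hf.comp hγ).continuous.measurable measurableSet_Ioo
  calc ENNReal.ofReal |h 0 - h L| = ENNReal.ofReal |h L - h 0| := by rw [abs_sub_comm]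
    _ ≤ volume (Icc 0 L ∩ h ⁻¹' uIoo (h 0) (h L)) := hh.ofReal_abs_sub_le_volume hL.le
    _ ≤ volume (γ ⁻¹' (f ⁻¹' Ioo a b) ∩ Icc 0 L) := measure_mono hsub
    _ = curveLintegral ((f ⁻¹' Ioo a b).indicator 1) γ L := by
        rw [← one_mul (volume _), ← curveLintegral_indicator_const hpre]
        rfl

lemma min_abs_sub_one_abs_add_one (x : ℝ) : min |x - 1| |x + 1| = |(|x| - 1)| := by
  rcases le_total 0 x with hx | hx
  · rw [abs_of_nonneg hx]
    exact min_eq_left (abs_le_abs (by linarith) (by linarith))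
  · rw [abs_of_nonpos hx, show -x - 1 = -(x + 1) by ring, abs_neg, abs_sub_comm]
    exact min_eq_right (abs_le_abs (by linarith) (by linarith))

def shell (r : ℝ) : Set ℝ := (fun x => |x| - 1) ⁻¹' Ioo 0 r

lemma measurableSet_shell (r : ℝ) : MeasurableSet (shell r) :=
  (measurable_abs.sub_const 1) measurableSet_Ioo

lemma volume_shell_le {r : ℝ} (hr : 0 ≤ r) : volume (shell r) ≤ ENNReal.ofReal (2 * r) := by
  have hsub : shell r ⊆ Ioo (-(1 + r)) (-1) ∪ Ioo 1 (1 + r) := by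
    rintro x ⟨h1 : 0 < |x| - 1, h2 : |x| - 1 < r⟩
    rcases le_total 0 x with hx | hx
    · rw [abs_of_nonneg hx] at h1 h2
      exact Or.inr ⟨by linarith, by linarith⟩
    · rw [abs_of_nonpos hx] at h1 h2
      exact Or.inl ⟨by linarith, by linarith⟩
  calc volume (shell r) ≤ volume (Ioo (-(1 + r)) (-1)) + volume (Ioo 1 (1 + r)) :=
        (measure_mono hsub).trans (measure_union_le _ _)
    _ = ENNReal.ofReal (2 * r) := by
        rw [Real.volume_Ioo, Real.volume_Ioo, ← ENNReal.ofReal_add (by linarith) (by linarith)]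
        ring_nf

noncomputable def weight (q x : ℝ) : ℝ≥0∞ := ENNReal.ofReal (min |x - 1| |x + 1| ^ (q - 1))

lemma measurable_weight (q : ℝ) : Measurable (weight q) := by
  unfold weight; fun_prop

lemma weight_le_of_mem_shell {q r x : ℝ} (hq : 1 ≤ q) (hx : x ∈ shell r) :
    weight q x ≤ ENNReal.ofReal (r ^ (q - 1)) := by
  rw [weight, min_abs_sub_one_abs_add_one, abs_of_pos hx.1]
  exact ENNReal.ofReal_le_ofReal (Real.rpow_le_rpow hx.1.le hx.2.le (sub_nonneg.2 hq))

lemma lintegral_indicator_shell_rpow_le {p q r : ℝ} (hp : 0 < p) (hq : 1 ≤ q) (hr : 0 < r) :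
    ∫⁻ x, (shell r).indicator (fun _ => ENNReal.ofReal r⁻¹) x ^ p
      ∂(volume.withDensity (weight q)) ≤ ENNReal.ofReal (2 * r ^ (q - p)) := by
  set c := ENNReal.ofReal (r ^ (q - 1)) * ENNReal.ofReal r⁻¹ ^ p
  have hpt : ∀ x, weight q x * (shell r).indicator (fun _ => ENNReal.ofReal r⁻¹) x ^ p
      ≤ (shell r).indicator (fun _ => c) x := by
    intro x
    by_cases hx : x ∈ shell r
    · simp only [indicator_of_mem hx, c]
      gcongr
      exact weight_le_of_mem_shell hq hx
    · simp [indicator_of_notMem hx, ENNReal.zero_rpow_of_pos hp]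
  have hc : c * ENNReal.ofReal (2 * r) = ENNReal.ofReal (2 * r ^ (q - p)) := by
    simp only [c]
    rw [ENNReal.ofReal_rpow_of_pos (inv_pos.2 hr), ← ENNReal.ofReal_mul (by positivity),
      ← ENNReal.ofReal_mul (by positivity), Real.inv_rpow hr.le, Real.rpow_sub hr,
      Real.rpow_sub hr, Real.rpow_one]
    congr 1
    field_simp
  calc ∫⁻ x, (shell r).indicator (fun _ => ENNReal.ofReal r⁻¹) x ^ p
        ∂(volume.withDensity (weight q))
      = ∫⁻ x, weight q x * (shell r).indicator (fun _ => ENNReal.ofReal r⁻¹) x ^ p :=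
        lintegral_withDensity_eq_lintegral_mul _ (measurable_weight q)
          ((measurable_const.indicator (measurableSet_shell r)).pow_const p)
    _ ≤ ∫⁻ x, (shell r).indicator (fun _ => c) x := lintegral_mono hpt
    _ = c * volume (shell r) := lintegral_indicator_const (measurableSet_shell r) c
    _ ≤ c * ENNReal.ofReal (2 * r) := by gcongr; exact volume_shell_le hr.le
    _ = ENNReal.ofReal (2 * r ^ (q - p)) := hc

/-- For `r > 0` this is the paper's `u_r(x) = max {0, 1 - dist(x, [-1, 1]) / r}`. -/
noncomputable def testFunction (r x : ℝ) : ℝ := 1 - r⁻¹ * min (max (|x| - 1) 0) r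

lemma lipschitzWith_abs_sub_one : LipschitzWith 1 fun x : ℝ => |x| - 1 :=
  LipschitzWith.of_dist_le_mul fun x y => by
    simpa [Real.dist_eq] using abs_abs_sub_abs_le_abs_sub x y

lemma exists_lipschitzWith_testFunction (r : ℝ) : ∃ K, LipschitzWith K (testFunction r) :=
  ⟨_, (LipschitzWith.const 1).sub
    ((lipschitzWith_smul r⁻¹).comp ((lipschitzWith_abs_sub_one.max_const 0).min_const r))⟩

lemma one_le_testFunction {r x : ℝ} (hr : 0 < r) (hx : x ∈ Icc (-1 : ℝ) 1) :
    1 ≤ testFunction r x := by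
  have : max (|x| - 1) 0 = 0 := max_eq_right (by linarith [abs_le.2 hx])
  simp [testFunction, this, min_eq_left hr.le]

lemma testFunction_eq_zero {r x : ℝ} (hr : 0 < r) (hr1 : r ≤ 1) (hx : x ∉ Ioo (-2 : ℝ) 2) :
    testFunction r x = 0 := by
  have h2 : 2 ≤ |x| := by
    by_contra! h
    exact hx (abs_lt.1 h)
  have : min (max (|x| - 1) 0) r = r := min_eq_right (le_max_of_le_left (by linarith))
  simp [testFunction, this, hr.ne']

lemma isUpperGradient_testFunction {r : ℝ} (hr : 0 < r) :
    IsUpperGradient (testFunction r) ((shell r).indicator fun _ => ENNReal.ofReal r⁻¹) := by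
  have hg : ((shell r).indicator fun _ => ENNReal.ofReal r⁻¹)
      = fun x => ENNReal.ofReal |r⁻¹| * (shell r).indicator 1 x := by
    ext x
    by_cases hx : x ∈ shell r <;> simp [hx, abs_of_pos hr]
  rw [hg]
  exact (isUpperGradient_min_max lipschitzWith_abs_sub_one hr.le).const_sub_mul 1 r⁻¹

lemma pCapacity_le_two_mul_rpow {p q r : ℝ} (hp : 0 < p) (hq : 1 ≤ q) (hr : 0 < r) (hr1 : r ≤ 1) :
    pCapacity (volume.withDensity (weight q)) p (Icc (-1) 1) (Ioo (-2) 2)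
      ≤ ENNReal.ofReal (2 * r ^ (q - p)) := by
  rw [pCapacity]
  refine (sInf_le ?_).trans
    ((setLIntegral_le_lintegral (Ioo (-2) 2) _).trans (lintegral_indicator_shell_rpow_le hp hq hr))
  exact ⟨testFunction r, exists_lipschitzWith_testFunction r,
    fun _ => one_le_testFunction hr, fun _ => testFunction_eq_zero hr hr1, _,
    (isUpperGradient_testFunction hr).isPWeakUpperGradient
      (measurable_const.indicator (measurableSet_shell r)) _ hp, rfl⟩

theorem stmt19 (p q : ℝ) (hp : 1 < p) (hpq : p < q) :
    pCapacity
      ((volume : Measure ℝ).withDensity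
        (fun x => ENNReal.ofReal (min |x - 1| |x + 1| ^ (q - 1))))
      p (Icc (-1 : ℝ) 1) (Ioo (-2 : ℝ) 2) = 0 := by
  have hpow : Tendsto (fun r : ℝ => 2 * r ^ (q - p)) (𝓝 0) (𝓝 0) := by
    simpa [Real.zero_rpow (sub_pos.2 hpq).ne'] using
      ((Real.continuousAt_rpow_const 0 (q - p) (Or.inr (sub_nonneg.2 hpq.le))).tendsto.const_mul 2)
  have hlim : Tendsto (fun r : ℝ => ENNReal.ofReal (2 * r ^ (q - p))) (𝓝[>] 0) (𝓝 0) := by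
    simpa using ENNReal.tendsto_ofReal (hpow.mono_left nhdsWithin_le_nhds)
  refine le_antisymm (ge_of_tendsto hlim ?_) zero_le
  filter_upwards [Ioc_mem_nhdsGT one_pos] with r hr
  exact pCapacity_le_two_mul_rpow (by linarith) (by linarith) hr.1 hr.2
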